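/- arXiv:2406.12694 — 2 statements merged into one kernel-verified Lean document; each statement's English description precedes it below -/
import Mathlib

section
/- If w and v are 0-free timed words (i.e., their event times are strictly increasing and strictly positive) and d(w,v) = 0, then w = v. Hence d restricted to 0-free timed words is a genuine metric. -/
open scoped ENNReal

noncomputable def dirDist {α : Type*} (w v : List (α × ℝ)) : ℝ≥0∞ :=
  ⨆ i : Fin w.length, ⨅ j : {j : Fin v.length // (v.get j).1 = (w.get i).1},
    ENNReal.ofReal |(w.get i).2 - (v.get j.1).2|

noncomputable def tdist {α : Type*} (w v : List (α × ℝ)) : ℝ≥0∞ :=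
  max (dirDist w v) (dirDist v w)

/-- A timed word is 0-free if its event times are strictly positive and strictly increasing. -/
def ZeroFree {α : Type*} (w : List (α × ℝ)) : Prop :=
  (∀ e ∈ w, 0 < e.2) ∧ w.Chain' (fun a b => a.2 < b.2)

/-! If `d⃗(w, v) = 0`, each infimum in it is over finitely many matching events of `v` and hence
attained, so every event of `w`, letter and time, occurs in `v`. Thus `d(w, v) = 0` means that `w`
and `v` contain the same events, and a list strictly sorted by time is determined by its elements. -/

section

variable {α : Type*}

theorem iInf_ofReal_abs_sub_eq_zero_iff_mem (v : List (α × ℝ)) (e : α × ℝ) :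
    ⨅ j : {j : Fin v.length // (v.get j).1 = e.1}, ENNReal.ofReal |e.2 - (v.get j.1).2| = 0 ↔
      e ∈ v := by
  constructor
  · intro h
    cases isEmpty_or_nonempty {j : Fin v.length // (v.get j).1 = e.1} with
    | inl hempty => simp only [iInf_of_empty, ENNReal.top_ne_zero] at h
    | inr hne =>
      obtain ⟨j, hj⟩ := exists_eq_ciInf_of_finite (f := fun j : {j : Fin v.length //
        (v.get j).1 = e.1} => ENNReal.ofReal |e.2 - (v.get j.1).2|)
      rw [← hj, ENNReal.ofReal_eq_zero, abs_nonpos_iff, sub_eq_zero] at h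
      exact List.mem_iff_get.mpr ⟨j, Prod.ext j.2 h.symm⟩
  · intro he
    obtain ⟨j, rfl⟩ := List.mem_iff_get.mp he
    exact nonpos_iff_eq_zero.mp (iInf_le_of_le ⟨j, rfl⟩ (by simp))

theorem dirDist_eq_zero_iff_subset {w v : List (α × ℝ)} : dirDist w v = 0 ↔ w ⊆ v := by
  simp only [dirDist, ENNReal.iSup_eq_zero, iInf_ofReal_abs_sub_eq_zero_iff_mem]
  exact List.forall_mem_iff_get.symm

theorem tdist_eq_zero_iff {w v : List (α × ℝ)} : tdist w v = 0 ↔ w ⊆ v ∧ v ⊆ w := by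
  rw [tdist, max_eq_zero, dirDist_eq_zero_iff_subset, dirDist_eq_zero_iff_subset]

theorem ZeroFree.pairwise {w : List (α × ℝ)} (hw : ZeroFree w) :
    w.Pairwise (InvImage (· < ·) Prod.snd) :=
  List.isChain_iff_pairwise.mp hw.2

end

/-- On 0-free timed words, `d` is a genuine metric: `d(w,v) = 0` implies `w = v`. -/
theorem tdist_eq_zero_of_zeroFree {α : Type*} (w v : List (α × ℝ))
    (hw : ZeroFree w) (hv : ZeroFree v) (h : tdist w v = 0) : w = v := by
  obtain ⟨hwv, hvw⟩ := tdist_eq_zero_iff.mp h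
  exact List.Subset.antisymm_of_pairwise hw.pairwise hv.pairwise hwv hvw
end

section
/- Let k ≥ 1 and consider a sequence of transitions, each of which is the pair (P^{k,l_i}, D^{k,l_i,d_i}) of a cyclic shift by l_i with delays d_i and d_i+1 as in the block form above. Suppose the composition of the shifts over the whole sequence is the identity permutation of {1,...,k}. Then for any two starting indices u, v ∈ {1,...,k}, the total delays accumulated along the trajectories of u and of v through the sequence are equal. -/
/-- Trajectory of an index under a sequence of cyclic shifts: the transition
`(P^{k,l_t}, D^{k,l_t,d_t})` moves index `p` to `(p + (k − l_t)) mod k`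
(the block form `[[0, I_l],[I_{k−l}, 0]]`). -/
def traj (k : ℕ) (l : ℕ → ℕ) (u : ℕ) : ℕ → ℕ
  | 0 => u
  | t + 1 => (traj k l u t + (k - l t)) % k

/-- If the composition of the cyclic shifts of a sequence of transitions
`(P^{k,l_t}, D^{k,l_t,d_t})` (charging delay `d_t + 1` to the `l_t` slow indices
`p < l_t` and `d_t` to the others) is the identity permutation, then any two starting
indices accumulate the same total delay along their trajectories. -/
theorem total_delay_independent_of_start (k m : ℕ) (hk : 0 < k)
    (l d : ℕ → ℕ) (hl : ∀ t < m, l t < k)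
    (hid : ∀ u < k, traj k l u m = u) :
    ∀ u < k, ∀ v < k,
      (∑ t ∈ Finset.range m, (if traj k l u t < l t then d t + 1 else d t)) =
      (∑ t ∈ Finset.range m, (if traj k l v t < l t then d t + 1 else d t)) := by
  -- trajectory stays below k
  have htraj : ∀ u < k, ∀ t, traj k l u t < k := by
    intro u hu t
    cases t with
    | zero => exact hu
    | succ t => exact Nat.mod_lt _ hk
  -- key invariant
  have key : ∀ u < k, ∀ t ≤ m,
      traj k l u t + k * (∑ s ∈ Finset.range t, if l s ≤ traj k l u s then 1 else 0)
        = u + ∑ s ∈ Finset.range t, (k - l s) := by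
    intro u hu t ht
    induction t with
    | zero => simp [traj]
    | succ t ih =>
      have ht' : t ≤ m := Nat.le_of_succ_le ht
      have hlt : l t < k := hl t (Nat.lt_of_lt_of_le (Nat.lt_succ_self t) ht)
      have htk := htraj u hu t
      rw [Finset.sum_range_succ, Finset.sum_range_succ]
      by_cases hs : l t ≤ traj k l u t
      · have hstep : traj k l u (t+1) + k = traj k l u t + (k - l t) := by
          have h1 : traj k l u t + (k - l t) = (traj k l u t - l t) + k := by omega
          have h2 : traj k l u t - l t < k := by omega
          show (traj k l u t + (k - l t)) % k + k = _
          rw [h1, Nat.add_mod_right, Nat.mod_eq_of_lt h2]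
        simp only [if_pos hs]
        rw [Nat.mul_succ]
        have := ih ht'
        omega
      · have hstep : traj k l u (t+1) = traj k l u t + (k - l t) := by
          have h2 : traj k l u t + (k - l t) < k := by omega
          show (traj k l u t + (k - l t)) % k = _
          rw [Nat.mod_eq_of_lt h2]
        simp only [if_neg hs, add_zero]
        have := ih ht'
        omega
  -- fast counts are equal
  intro u hu v hv
  have hFu := key u hu m le_rfl
  have hFv := key v hv m le_rfl
  rw [hid u hu] at hFu
  rw [hid v hv] at hFv
  have hF : (∑ s ∈ Finset.range m, if l s ≤ traj k l u s then 1 else 0)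
      = (∑ s ∈ Finset.range m, if l s ≤ traj k l v s then 1 else 0) :=
    Nat.eq_of_mul_eq_mul_left hk (by omega)
  -- decompose delay sums
  have decomp : ∀ w : ℕ,
      (∑ t ∈ Finset.range m, (if traj k l w t < l t then d t + 1 else d t))
        + (∑ s ∈ Finset.range m, if l s ≤ traj k l w s then 1 else 0)
      = (∑ t ∈ Finset.range m, d t) + m := by
    intro w
    rw [← Finset.sum_add_distrib]
    rw [show (∑ t ∈ Finset.range m, d t) + m
        = ∑ t ∈ Finset.range m, (d t + 1) by
      rw [Finset.sum_add_distrib]; simp]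
    apply Finset.sum_congr rfl
    intro t _
    by_cases h : traj k l w t < l t
    · rw [if_pos h, if_neg (by omega)]
    · rw [if_neg h, if_pos (by omega)]
  have du := decomp u
  have dv := decomp v
  omega
end
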